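/- In the W-graph model EG(Φ), the statistic W = (1/n) Σ_i (D_i − (n−1)φ⁰₁)² has expectation E[W] = n^{−1}[ n(n−1)²(φ⁰₁)² + (1 − 2(n−1)φ⁰₁) n₁ φ₁ + n₂ φ₂ ], where n₁ = n(n−1), n₂ = n(n−1)(n−2), φ₁ = ∫∫ Φ, φ₂ = ∫∫∫ Φ(u,v)Φ(u,w), and φ⁰₁ = ∫∫ Φ⁰ for a reference graphon Φ⁰. -/

import Mathlib

open MeasureTheory ProbabilityTheory Finset

/-!
Expanding the square, `E (D_i - c)² = ∑_{j,k ≠ i} E[Y_ij Y_ik] - 2c ∑_{j ≠ i} E[Y_ij] + c²`.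
Since `Y_ij ∈ {0,1}`, the `n - 1` diagonal terms are `E[Y_ij] = φ₁`, and the `(n-1)(n-2)`
off-diagonal terms are two-stars `E[Y_ij Y_ik]`. The moment hypothesis replaces these by the
corresponding moments of `Φ(U_i, U_j)`, and independence of the uniform latent variables turns
those into the integrals `φ₁` and `φ₂`.
-/

section Independence

variable {Ω α β : Type*} [MeasurableSpace Ω] [MeasurableSpace α] [MeasurableSpace β]
  {μ : Measure Ω} [IsFiniteMeasure μ]

theorem ProbabilityTheory.IndepFun.integral_comp_prodMk {A : Ω → α} {B : Ω → β}
    (hAB : IndepFun A B μ) (hA : AEMeasurable A μ) (hB : AEMeasurable B μ)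
    {f : α × β → ℝ} (hf : Integrable f ((μ.map A).prod (μ.map B))) :
    ∫ ω, f (A ω, B ω) ∂μ = ∫ x, ∫ y, f (x, y) ∂(μ.map B) ∂(μ.map A) := by
  have hmap := (indepFun_iff_map_prod_eq_prod_map_map hA hB).mp hAB
  rw [← integral_prod f hf, ← hmap,
    integral_map (hA.prodMk hB) (by rw [hmap]; exact hf.aestronglyMeasurable)]

end Independence

section Graphon

variable {Ω : Type*} [MeasurableSpace Ω] {μ : Measure Ω} [IsFiniteMeasure μ]
  {ν : Measure ℝ} [IsFiniteMeasure ν] {Φ : ℝ → ℝ → ℝ} {C : ℝ}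

lemma integral_graphon_comp (hΦmeas : Measurable fun q : ℝ × ℝ => Φ q.1 q.2)
    (hΦbdd : ∀ u v, |Φ u v| ≤ C) {A B : Ω → ℝ} (hA : Measurable A) (hB : Measurable B)
    (hAB : IndepFun A B μ) (hAlaw : μ.map A = ν) (hBlaw : μ.map B = ν) :
    ∫ ω, Φ (A ω) (B ω) ∂μ = ∫ u, ∫ v, Φ u v ∂ν ∂ν := by
  have hΦint : Integrable (fun q : ℝ × ℝ => Φ q.1 q.2) (ν.prod ν) :=
    .of_bound hΦmeas.aestronglyMeasurable C (ae_of_all _ fun q => hΦbdd q.1 q.2)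
  have h := hAB.integral_comp_prodMk hA.aemeasurable hB.aemeasurable (f := fun q => Φ q.1 q.2)
    (by rwa [hAlaw, hBlaw])
  rwa [hAlaw, hBlaw] at h

lemma integral_graphon_mul_graphon_comp (hΦmeas : Measurable fun q : ℝ × ℝ => Φ q.1 q.2)
    (hΦbdd : ∀ u v, |Φ u v| ≤ C) {A B D : Ω → ℝ} (hA : Measurable A) (hB : Measurable B)
    (hD : Measurable D) (hAB : IndepFun A B μ) (hABD : IndepFun (fun ω => (A ω, B ω)) D μ)
    (hAlaw : μ.map A = ν) (hBlaw : μ.map B = ν) (hDlaw : μ.map D = ν) :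
    ∫ ω, Φ (A ω) (B ω) * Φ (A ω) (D ω) ∂μ = ∫ u, ∫ v, ∫ w, Φ u v * Φ u w ∂ν ∂ν ∂ν := by
  set g : (ℝ × ℝ) × ℝ → ℝ := fun p => Φ p.1.1 p.1.2 * Φ p.1.1 p.2
  have hgint : Integrable g ((ν.prod ν).prod ν) := by
    refine .of_bound ?_ (C * C) (ae_of_all _ fun p => ?_)
    · exact ((hΦmeas.comp (measurable_fst.fst.prodMk measurable_fst.snd)).mul
        (hΦmeas.comp (measurable_fst.fst.prodMk measurable_snd))).aestronglyMeasurable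
    · rw [Real.norm_eq_abs, abs_mul]
      exact mul_le_mul (hΦbdd _ _) (hΦbdd _ _) (abs_nonneg _) ((abs_nonneg _).trans (hΦbdd 0 0))
  have hmapAB : μ.map (fun ω => (A ω, B ω)) = ν.prod ν := by
    rw [(indepFun_iff_map_prod_eq_prod_map_map hA.aemeasurable hB.aemeasurable).mp hAB,
      hAlaw, hBlaw]
  have h := hABD.integral_comp_prodMk (hA.prodMk hB).aemeasurable hD.aemeasurable (f := g)
    (by rwa [hmapAB, hDlaw])
  rw [hmapAB, hDlaw] at h
  exact h.trans (integral_prod _ hgint.integral_prod_left)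

end Graphon

section EdgeMoments

variable {ι Ω : Type*} [LinearOrder ι] [MeasurableSpace Ω] {μ : Measure Ω}
  {Y Z : ι → ι → Ω → ℝ}

lemma apply_min_max_of_symm {β : Type*} {f : ι → ι → β} (hf : ∀ i j, f i j = f j i)
    (i j : ι) : f (min i j) (max i j) = f i j := by
  rcases le_total i j with h | h
  · rw [min_eq_left h, max_eq_right h]
  · rw [min_eq_right h, max_eq_left h, hf]

lemma min_max_injective (i : ι) : Function.Injective fun j => (min i j, max i j) := by
  intro j k h
  simp only [Prod.mk.injEq] at h
  rcases le_total i j with hj | hj <;> rcases le_total i k with hk | hk <;>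
    simp_all

lemma integral_eq_of_moments_eq (hY : ∀ i j, Y i j = Y j i) (hZ : ∀ i j, Z i j = Z j i)
    (hmom : ∀ S : Finset (ι × ι), (∀ e ∈ S, e.1 < e.2) →
      ∫ ω, ∏ e ∈ S, Y e.1 e.2 ω ∂μ = ∫ ω, ∏ e ∈ S, Z e.1 e.2 ω ∂μ)
    {i j : ι} (hij : i ≠ j) :
    ∫ ω, Y i j ω ∂μ = ∫ ω, Z i j ω ∂μ := by
  have h := hmom {(min i j, max i j)} (by simpa using hij.symm)
  simpa only [prod_singleton, apply_min_max_of_symm hY, apply_min_max_of_symm hZ] using h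

lemma integral_mul_eq_of_moments_eq (hY : ∀ i j, Y i j = Y j i) (hZ : ∀ i j, Z i j = Z j i)
    (hmom : ∀ S : Finset (ι × ι), (∀ e ∈ S, e.1 < e.2) →
      ∫ ω, ∏ e ∈ S, Y e.1 e.2 ω ∂μ = ∫ ω, ∏ e ∈ S, Z e.1 e.2 ω ∂μ)
    {i j k : ι} (hij : i ≠ j) (hik : i ≠ k) (hjk : j ≠ k) :
    ∫ ω, Y i j ω * Y i k ω ∂μ = ∫ ω, Z i j ω * Z i k ω ∂μ := by
  classical
  have h := hmom {(min i j, max i j), (min i k, max i k)} (by simpa using ⟨hij.symm, hik.symm⟩)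
  simpa only [prod_pair ((min_max_injective i).ne hjk), apply_min_max_of_symm hY,
    apply_min_max_of_symm hZ] using h

end EdgeMoments

section SecondMoment

variable {Ω ι : Type*} [MeasurableSpace Ω] {μ : Measure Ω} [IsProbabilityMeasure μ]

lemma memLp_of_forall_eq_zero_or_one {X : Ω → ℝ} (hX : Measurable X)
    (hX01 : ∀ ω, X ω = 0 ∨ X ω = 1) (p : ENNReal) : MemLp X p μ :=
  .of_bound hX.aestronglyMeasurable 1
    (ae_of_all _ fun ω => by rcases hX01 ω with h | h <;> simp [h])

lemma integral_sum_sub_const_sq (s : Finset ι) {X : ι → Ω → ℝ} (hX : ∀ j ∈ s, MemLp (X j) 2 μ)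
    (c : ℝ) :
    ∫ ω, (∑ j ∈ s, X j ω - c) ^ 2 ∂μ
      = ∑ j ∈ s, ∑ k ∈ s, ∫ ω, X j ω * X k ω ∂μ - 2 * c * ∑ j ∈ s, ∫ ω, X j ω ∂μ + c ^ 2 := by
  have hX1 : ∀ j ∈ s, Integrable (X j) μ := fun j hj => (hX j hj).integrable one_le_two
  have hXX : ∀ j ∈ s, ∀ k ∈ s, Integrable (fun ω => X j ω * X k ω) μ :=
    fun j hj k hk => (hX j hj).integrable_mul (hX k hk)
  have hexpand : ∀ ω, (∑ j ∈ s, X j ω - c) ^ 2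
      = ∑ j ∈ s, ∑ k ∈ s, X j ω * X k ω - 2 * c * ∑ j ∈ s, X j ω + c ^ 2 := by
    intro ω
    rw [← sum_mul_sum]
    ring
  have hS2 : Integrable (fun ω => ∑ j ∈ s, ∑ k ∈ s, X j ω * X k ω) μ :=
    integrable_finsetSum _ fun j hj => integrable_finsetSum _ (hXX j hj)
  have hS1 : Integrable (fun ω => 2 * c * ∑ j ∈ s, X j ω) μ :=
    (integrable_finsetSum _ hX1).const_mul _
  have hS : Integrable (fun ω => ∑ j ∈ s, ∑ k ∈ s, X j ω * X k ω - 2 * c * ∑ j ∈ s, X j ω) μ :=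
    hS2.sub hS1
  simp_rw [hexpand]
  rw [integral_add hS (integrable_const _), integral_sub hS2 hS1, integral_const_mul,
    integral_finsetSum _ hX1, integral_finsetSum _ fun j hj => integrable_finsetSum _ (hXX j hj),
    integral_const, sum_congr rfl fun j hj => integral_finsetSum _ (hXX j hj)]
  simp

lemma sum_sum_ite_eq {R : Type*} [CommRing R] [DecidableEq ι] (s : Finset ι) (a b : R) :
    ∑ j ∈ s, ∑ k ∈ s, (if j = k then a else b) = #s * a + #s * (#s - 1) * b := by
  have hsplit : ∀ j k : ι, (if j = k then a else b) = b + if j = k then a - b else 0 := by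
    intro j k; split_ifs <;> ring
  simp only [hsplit, sum_add_distrib, sum_const, sum_ite_eq, sum_ite_mem, inter_self,
    nsmul_eq_mul]
  ring

lemma integral_sum_sub_const_sq_of_forall_eq_zero_or_one [DecidableEq ι] (s : Finset ι)
    {X : ι → Ω → ℝ} (hXmeas : ∀ j ∈ s, Measurable (X j))
    (hX01 : ∀ j ∈ s, ∀ ω, X j ω = 0 ∨ X j ω = 1) {p q : ℝ}
    (hp : ∀ j ∈ s, ∫ ω, X j ω ∂μ = p)
    (hq : ∀ j ∈ s, ∀ k ∈ s, j ≠ k → ∫ ω, X j ω * X k ω ∂μ = q) (c : ℝ) :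
    ∫ ω, (∑ j ∈ s, X j ω - c) ^ 2 ∂μ = #s * p + #s * (#s - 1) * q - 2 * c * (#s * p) + c ^ 2 := by
  have hpq : ∀ j ∈ s, ∀ k ∈ s, ∫ ω, X j ω * X k ω ∂μ = if j = k then p else q := by
    intro j hj k hk
    split_ifs with hjk
    · subst hjk
      have hsq : (fun ω => X j ω * X j ω) = X j := by
        funext ω
        rcases hX01 j hj ω with h | h <;> simp [h]
      rw [hsq, hp j hj]
    · exact hq j hj k hk hjk
  rw [integral_sum_sub_const_sq s fun j hj => memLp_of_forall_eq_zero_or_one (hXmeas j hj)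
      (hX01 j hj) 2,
    sum_congr rfl fun j hj => sum_congr rfl (hpq j hj), sum_sum_ite_eq, sum_congr rfl hp,
    sum_const, nsmul_eq_mul]

end SecondMoment

theorem wgraph_degree_mean_square_expectation_general
    {Ω : Type*} [MeasurableSpace Ω] (μ : Measure Ω) [IsProbabilityMeasure μ]
    (n : ℕ) (Φ : ℝ → ℝ → ℝ)
    (hΦmeas : Measurable fun q : ℝ × ℝ => Φ q.1 q.2)
    (hΦsym : ∀ u v, Φ u v = Φ v u)
    (hΦ01 : ∀ u v, 0 ≤ Φ u v ∧ Φ u v ≤ 1)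
    (U : Fin n → Ω → ℝ) (hUmeas : ∀ i, Measurable (U i))
    (hUindep : iIndepFun U μ)
    (hUlaw : ∀ i, μ.map (U i) = (volume : Measure ℝ).restrict (Set.Icc 0 1))
    (Y : Fin n → Fin n → Ω → ℝ)
    (hYsym : ∀ i j, Y i j = Y j i)
    (hYmeas : ∀ i j, Measurable (Y i j))
    (h01 : ∀ i j ω, Y i j ω = 0 ∨ Y i j ω = 1)
    (hmom : ∀ S : Finset (Fin n × Fin n), (∀ e ∈ S, e.1 < e.2) →
      ∫ ω, ∏ e ∈ S, Y e.1 e.2 ω ∂μ = ∫ ω, ∏ e ∈ S, Φ (U e.1 ω) (U e.2 ω) ∂μ)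
    (φ₁ φ₂ φ01 : ℝ)
    (hφ₁ : φ₁ = ∫ u in Set.Icc (0 : ℝ) 1, ∫ v in Set.Icc (0 : ℝ) 1, Φ u v)
    (hφ₂ : φ₂ = ∫ u in Set.Icc (0 : ℝ) 1, ∫ v in Set.Icc (0 : ℝ) 1,
        ∫ w in Set.Icc (0 : ℝ) 1, Φ u v * Φ u w) :
    ∫ ω, (1 / (n : ℝ)) * ∑ i,
        ((∑ j ∈ univ.filter (fun j => j ≠ i), Y i j ω) - ((n : ℝ) - 1) * φ01) ^ 2 ∂μ
      = (1 / (n : ℝ)) *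
          ((n : ℝ) * ((n : ℝ) - 1) ^ 2 * φ01 ^ 2
            + (1 - 2 * ((n : ℝ) - 1) * φ01) * ((n : ℝ) * ((n : ℝ) - 1)) * φ₁
            + ((n : ℝ) * ((n : ℝ) - 1) * ((n : ℝ) - 2)) * φ₂) := by
  classical
  set Z : Fin n → Fin n → Ω → ℝ := fun i j ω => Φ (U i ω) (U j ω)
  have hZsym : ∀ i j, Z i j = Z j i := fun i j => funext fun ω => hΦsym _ _
  have hΦbdd : ∀ u v, |Φ u v| ≤ 1 := fun u v =>
    abs_le.mpr ⟨by linarith [(hΦ01 u v).1], (hΦ01 u v).2⟩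
  have hedge : ∀ i j, i ≠ j → ∫ ω, Y i j ω ∂μ = φ₁ := fun i j hij => by
    rw [integral_eq_of_moments_eq hYsym hZsym hmom hij, hφ₁]
    exact integral_graphon_comp hΦmeas hΦbdd (hUmeas i) (hUmeas j) (hUindep.indepFun hij)
      (hUlaw i) (hUlaw j)
  have hcherry : ∀ i j k, i ≠ j → i ≠ k → j ≠ k → ∫ ω, Y i j ω * Y i k ω ∂μ = φ₂ :=
    fun i j k hij hik hjk => by
      rw [integral_mul_eq_of_moments_eq hYsym hZsym hmom hij hik hjk, hφ₂]
      exact integral_graphon_mul_graphon_comp hΦmeas hΦbdd (hUmeas i) (hUmeas j) (hUmeas k)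
        (hUindep.indepFun hij) (hUindep.indepFun_prodMk hUmeas i j k hik hjk)
        (hUlaw i) (hUlaw j) (hUlaw k)
  have hcard : ∀ i : Fin n, (#(univ.filter (· ≠ i)) : ℝ) = n - 1 := fun i => by
    rw [filter_ne', card_erase_of_mem (mem_univ i), card_univ, Fintype.card_fin,
      Nat.cast_sub i.pos, Nat.cast_one]
  have hvertex : ∀ i, ∫ ω, (∑ j ∈ univ.filter (· ≠ i), Y i j ω - (n - 1) * φ01) ^ 2 ∂μ
      = (n - 1) * φ₁ + (n - 1) * (n - 2) * φ₂ - 2 * ((n - 1) * φ01) * ((n - 1) * φ₁)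
        + ((n - 1) * φ01) ^ 2 := fun i => by
    rw [integral_sum_sub_const_sq_of_forall_eq_zero_or_one _ (fun j _ => hYmeas i j)
      (fun j _ => h01 i j) (fun j hj => hedge i j (mem_filter.mp hj).2.symm)
      (fun j hj k hk => hcherry i j k (mem_filter.mp hj).2.symm (mem_filter.mp hk).2.symm),
      hcard]
    ring
  have hint : ∀ i, Integrable
      (fun ω => (∑ j ∈ univ.filter (· ≠ i), Y i j ω - (n - 1) * φ01) ^ 2) μ := fun i =>
    ((memLp_finsetSum _ fun j _ => memLp_of_forall_eq_zero_or_one (hYmeas i j) (h01 i j) 2).sub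
      (memLp_const _)).integrable_sq
  rw [integral_const_mul, integral_finsetSum _ fun i _ => hint i, sum_congr rfl fun i _ =>
    hvertex i, sum_const, card_univ, Fintype.card_fin, nsmul_eq_mul]
  ring

/-- Expectation of the degree mean square statistic in the W-graph
model EG(Φ), relative to a reference graphon Φ⁰ with edge density φ⁰₁. -/
theorem wgraph_degree_mean_square_expectation
    {Ω : Type*} [MeasurableSpace Ω] (μ : Measure Ω) [IsProbabilityMeasure μ]
    (n : ℕ) (Φ Φ0 : ℝ → ℝ → ℝ)
    (hΦmeas : Measurable fun q : ℝ × ℝ => Φ q.1 q.2)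
    (hΦsym : ∀ u v, Φ u v = Φ v u)
    (hΦ01 : ∀ u v, 0 ≤ Φ u v ∧ Φ u v ≤ 1)
    (hΦ0sym : ∀ u v, Φ0 u v = Φ0 v u)
    (hΦ001 : ∀ u v, 0 ≤ Φ0 u v ∧ Φ0 u v ≤ 1)
    (U : Fin n → Ω → ℝ) (hUmeas : ∀ i, Measurable (U i))
    (hUindep : iIndepFun U μ)
    (hUlaw : ∀ i, μ.map (U i) = (volume : Measure ℝ).restrict (Set.Icc 0 1))
    (Y : Fin n → Fin n → Ω → ℝ)
    (hYsym : ∀ i j, Y i j = Y j i) (hYdiag : ∀ i, Y i i = 0)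
    (hYmeas : ∀ i j, Measurable (Y i j))
    (h01 : ∀ i j ω, Y i j ω = 0 ∨ Y i j ω = 1)
    (hmom : ∀ S : Finset (Fin n × Fin n), (∀ e ∈ S, e.1 < e.2) →
      ∫ ω, ∏ e ∈ S, Y e.1 e.2 ω ∂μ = ∫ ω, ∏ e ∈ S, Φ (U e.1 ω) (U e.2 ω) ∂μ)
    (φ₁ φ₂ φ01 : ℝ)
    (hφ₁ : φ₁ = ∫ u in Set.Icc (0 : ℝ) 1, ∫ v in Set.Icc (0 : ℝ) 1, Φ u v)
    (hφ₂ : φ₂ = ∫ u in Set.Icc (0 : ℝ) 1, ∫ v in Set.Icc (0 : ℝ) 1,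
        ∫ w in Set.Icc (0 : ℝ) 1, Φ u v * Φ u w)
    (hφ01 : φ01 = ∫ u in Set.Icc (0 : ℝ) 1, ∫ v in Set.Icc (0 : ℝ) 1, Φ0 u v) :
    ∫ ω, (1 / (n : ℝ)) * ∑ i,
        ((∑ j ∈ univ.filter (fun j => j ≠ i), Y i j ω) - ((n : ℝ) - 1) * φ01) ^ 2 ∂μ
      = (1 / (n : ℝ)) *
          ((n : ℝ) * ((n : ℝ) - 1) ^ 2 * φ01 ^ 2
            + (1 - 2 * ((n : ℝ) - 1) * φ01) * ((n : ℝ) * ((n : ℝ) - 1)) * φ₁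
            + ((n : ℝ) * ((n : ℝ) - 1) * ((n : ℝ) - 2)) * φ₂) :=
  wgraph_degree_mean_square_expectation_general μ n Φ hΦmeas hΦsym hΦ01 U hUmeas hUindep hUlaw Y
    hYsym hYmeas h01 hmom φ₁ φ₂ φ01 hφ₁ hφ₂
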